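/- For all n ≥ 0, spa(2n+1) + spa(4n+1) + spa(8n+1) is even. -/
import Mathlib


def spa : ℕ → ℕ
  | 0 => 1
  | 1 => 0
  | n + 2 => if (n + 2) % 2 = 0 then spa ((n + 2) / 2) else spa n + spa (n - 1)
decreasing_by all_goals omega

def gpar (r : ℕ) : ℕ := if r = 0 ∨ r = 3 ∨ r = 5 ∨ r = 6 then 1 else 0

lemma spa_mod : ∀ n, spa n % 2 = gpar (n % 7) := by
  intro n
  induction n using Nat.strong_induction_on with
  | _ n ih =>
  match n with
  | 0 => simp [spa, gpar]
  | 1 => simp [spa, gpar]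
  | (m+2) =>
    rw [spa]
    by_cases h : (m+2) % 2 = 0
    · rw [if_pos h, ih ((m+2)/2) (by omega)]
      obtain ⟨k, hk⟩ : ∃ k, m + 2 = 2 * k := ⟨(m+2)/2, by omega⟩
      have h2 : (m+2)/2 = k := by omega
      rw [h2, hk]
      have hr : k % 7 < 7 := Nat.mod_lt _ (by norm_num)
      have h3 : (2 * k) % 7 = (2 * (k % 7)) % 7 := by omega
      rw [h3]
      interval_cases hk : (k % 7) <;> simp [gpar]
    · rw [if_neg h, Nat.add_mod, ih m (by omega), ih (m-1) (by omega)]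
      have hr : m % 14 < 14 := Nat.mod_lt _ (by norm_num)
      have e1 : (m + 2) % 7 = (m % 14 + 2) % 7 := by omega
      have e2 : m % 7 = (m % 14) % 7 := by omega
      have e3 : (m - 1) % 7 = (m % 14 - 1) % 7 := by omega
      have hodd : m % 2 = 1 := by omega
      have hodd2 : (m % 14) % 2 = 1 := by omega
      rw [e1, e2, e3]
      interval_cases hk : (m % 14) <;> simp_all [gpar]

theorem spa_parity (n : ℕ) : Even (spa (2 * n + 1) + spa (4 * n + 1) + spa (8 * n + 1)) := by
  have h1 := spa_mod (2 * n + 1)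
  have h2 := spa_mod (4 * n + 1)
  have h3 := spa_mod (8 * n + 1)
  rw [Nat.even_iff]
  rw [Nat.add_mod, Nat.add_mod (spa (2*n+1)), h1, h2, h3]
  have hr : n % 7 < 7 := Nat.mod_lt _ (by norm_num)
  have e1 : (2 * n + 1) % 7 = (2 * (n % 7) + 1) % 7 := by omega
  have e2 : (4 * n + 1) % 7 = (4 * (n % 7) + 1) % 7 := by omega
  have e3 : (8 * n + 1) % 7 = (8 * (n % 7) + 1) % 7 := by omega
  rw [e1, e2, e3]
  interval_cases hk : (n % 7) <;> simp [gpar]
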